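/- Let G be a graph that is both a VPT graph and a split graph with split partition (S,K), such that every vertex v ∈ K satisfies |N(v)∩S| ≤ 2, and let n ≥ 4. If the branch graph B(G/K) contains an induced cycle C_n on n vertices, then G contains an induced n-sun S_n. -/

import Mathlib

open SimpleGraph

/-- `S` induces a path (a nonempty connected subgraph with maximum degree at most 2,
i.e. a subtree which is a path when `T` is a tree) in the graph `T`. -/
def IsPathSet {W : Type*} (T : SimpleGraph W) (S : Set W) : Prop :=
  S.Nonempty ∧
  (∀ x ∈ S, ∀ y ∈ S, ∃ p : T.Walk x y, ∀ z ∈ p.support, z ∈ S) ∧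
  (∀ x ∈ S, (T.neighborSet x ∩ S).ncard ≤ 2)

/-- A VPT-representation of `G` on host tree `T`: a family of paths of the tree `T`,
one for each vertex of `G`, such that two distinct vertices of `G` are adjacent iff
the corresponding paths share a vertex. -/
structure VPTRep {V W : Type*} (G : SimpleGraph V) (T : SimpleGraph W) where
  tree : T.IsTree
  path : V → Set W
  isPath : ∀ v, IsPathSet T (path v)
  adj_iff : ∀ u v : V, u ≠ v → (G.Adj u v ↔ (path u ∩ path v).Nonempty)

/-- `G` is a VPT graph: it has a VPT-representation on some finite host tree. -/
def IsVPT {V : Type*} (G : SimpleGraph V) : Prop :=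
  ∃ (n : ℕ) (T : SimpleGraph (Fin n)), Nonempty (VPTRep G T)

/-- `G` belongs to the class [h,2,1]: it has a VPT-representation whose host tree has
maximum degree at most `h`. -/
def MemH21 {V : Type*} (G : SimpleGraph V) (h : ℕ) : Prop :=
  ∃ (n : ℕ) (T : SimpleGraph (Fin n)) (_ : VPTRep G T),
    ∀ x : Fin n, (T.neighborSet x).ncard ≤ h

/-- `C` is a clique of `G`: a maximal set of pairwise adjacent vertices. -/
def IsMaxClique {V : Type*} (G : SimpleGraph V) (C : Set V) : Prop :=
  G.IsClique C ∧ ∀ D, G.IsClique D → C ⊆ D → D = C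

/-- The branch graph `B(G/C)`, as a graph on the vertex set of `G`; its relevant
vertices are those of `branchVerts G C`, all others are isolated. -/
def branchGraph {V : Type*} (G : SimpleGraph V) (C : Set V) : SimpleGraph V where
  Adj v w := v ∉ C ∧ w ∉ C ∧ v ≠ w ∧ ¬ G.Adj v w ∧
    (∃ u ∈ C, G.Adj u v ∧ G.Adj u w) ∧
    (∃ v' ∈ C, G.Adj v' v ∧ ¬ G.Adj v' w) ∧
    (∃ w' ∈ C, G.Adj w' w ∧ ¬ G.Adj w' v)
  symm := by
    refine ⟨?_⟩
    rintro v w ⟨h1, h2, h3, h4, ⟨u, hu, hu1, hu2⟩, ⟨v', hv', hv1, hv2⟩, ⟨w', hw', hw1, hw2⟩⟩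
    exact ⟨h2, h1, h3.symm, fun hadj => h4 hadj.symm, ⟨u, hu, hu2, hu1⟩,
      ⟨w', hw', hw1, hw2⟩, ⟨v', hv', hv1, hv2⟩⟩
  loopless := by refine ⟨?_⟩; rintro v ⟨_, _, h, _⟩; exact h rfl

/-- The vertex set of the branch graph `B(G/C)`: vertices outside `C` adjacent to
some vertex of `C`. -/
def branchVerts {V : Type*} (G : SimpleGraph V) (C : Set V) : Set V :=
  {v | v ∉ C ∧ ∃ u ∈ C, G.Adj u v}

/-- `B` is a branch of `T` at `q`: a connected component of `T - q`, i.e. the set of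
vertices reachable from some neighbor `y` of `q` by a walk avoiding `q`. -/
def BranchAt {W : Type*} (T : SimpleGraph W) (q : W) (B : Set W) : Prop :=
  ∃ y, T.Adj q y ∧ B = {x | ∃ p : T.Walk y x, q ∉ p.support}

/-- `(S, K)` is a split partition of `G`: `S` is a stable set, `K` is a complete set,
and they partition the vertices. -/
def IsSplitPartition {V : Type*} (G : SimpleGraph V) (S K : Set V) : Prop :=
  (∀ v, v ∈ S ∨ v ∈ K) ∧ Disjoint S K ∧
  (∀ a ∈ S, ∀ b ∈ S, ¬ G.Adj a b) ∧ G.IsClique K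

/-- The cycle graph `Cₙ` on `Fin n` (a cycle for `n ≥ 3`): `i` is adjacent to
`i ± 1 (mod n)`. -/
def cycleG (n : ℕ) : SimpleGraph (Fin n) :=
  SimpleGraph.fromRel (fun i j => (j : ℕ) = ((i : ℕ) + 1) % n)

/-- The `n`-sun `Sₙ` (for `n ≥ 4`): the split graph on `Fin n ⊕ Fin n` whose central
clique is `{Sum.inr i}` (the vertices `vᵢ`) and whose stable set is `{Sum.inl i}`
(the vertices `sᵢ`), with `sᵢ` adjacent exactly to `vᵢ` and `v_{i+1 (mod n)}`. -/
def sunG (n : ℕ) : SimpleGraph (Fin n ⊕ Fin n) :=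
  SimpleGraph.fromRel (fun a b =>
    match a, b with
    | Sum.inr _, Sum.inr _ => True
    | Sum.inl i, Sum.inr j => (j : ℕ) = (i : ℕ) ∨ (j : ℕ) = ((i : ℕ) + 1) % n
    | _, _ => False)

/- The vertices `s₀, …, s_{n-1}` of the induced cycle lie in `S`, and consecutive
ones `s_{j-1}, s_j` have a common neighbour `v_j ∈ K`. Since `v_j` has at most two neighbours
in `S`, these are exactly `s_{j-1}` and `s_j`; for `n ≥ 3` this forces the `v_j` to be distinct,
and `K` is a clique while `S` is stable, so the `s_i` and `v_j` induce an `n`-sun. -/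

open Function

namespace Fin

variable {n : ℕ} [NeZero n]

theorem val_add_one_eq_mod (i : Fin n) : ((i + 1 : Fin n) : ℕ) = (i + 1) % n := by
  simp [Fin.val_add]

theorem self_ne_add_one (hn : 1 < n) (i : Fin n) : i ≠ i + 1 := by
  rw [ne_comm, Ne, add_eq_left, Fin.ext_iff, Fin.val_one', Fin.val_zero, Nat.mod_eq_of_lt hn]
  exact one_ne_zero

theorem add_one_add_one_ne_self (hn : 2 < n) (i : Fin n) : i + 1 + 1 ≠ i := by
  rw [Ne, add_assoc, add_eq_left, Fin.ext_iff, Fin.val_add, Fin.val_one', Fin.val_zero,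
    Nat.mod_eq_of_lt (by omega : 1 < n), Nat.mod_eq_of_lt hn]
  exact two_ne_zero

end Fin

theorem Set.eq_pair_of_ncard_le_two {α : Type*} {A : Set α} {a b : α} (hA : A.Finite)
    (hA₂ : A.ncard ≤ 2) (ha : a ∈ A) (hb : b ∈ A) (hab : a ≠ b) : A = {a, b} :=
  (Set.eq_of_subset_of_ncard_le (Set.pair_subset ha hb) (by rwa [Set.ncard_pair hab]) hA).symm

section Sun

variable {n : ℕ}

theorem sunG_not_adj_inl_inl (i j : Fin n) : ¬ (sunG n).Adj (.inl i) (.inl j) := by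
  simp [sunG]

theorem sunG_adj_inr_inr (i j : Fin n) : (sunG n).Adj (.inr i) (.inr j) ↔ i ≠ j := by
  simp [sunG]

variable [NeZero n]

theorem sunG_adj_inl_inr (i j : Fin n) :
    (sunG n).Adj (.inl i) (.inr j) ↔ j = i ∨ j = i + 1 := by
  simp [sunG, Fin.ext_iff, Fin.val_add_one_eq_mod]

theorem cycleG_adj_add_one (hn : 1 < n) (i : Fin n) : (cycleG n).Adj i (i + 1) := by
  rw [cycleG, fromRel_adj]
  exact ⟨Fin.self_ne_add_one hn i, Or.inl (Fin.val_add_one_eq_mod i)⟩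

variable {V : Type*} {G : SimpleGraph V}

theorem injective_of_adj_iff_eq_or_eq_add_one (hn : 2 < n) {s v : Fin n → V}
    (hadj : ∀ i j, G.Adj (s i) (v j) ↔ j = i ∨ j = i + 1) : Injective v := by
  intro i j hij
  have hj : i = j ∨ i = j + 1 := (hadj j i).mp (by rw [hij]; exact (hadj j j).mpr (.inl rfl))
  have hj' : i = j - 1 ∨ i = j - 1 + 1 := (hadj (j - 1) i).mp
    (by rw [hij]; exact (hadj (j - 1) j).mpr (.inr (sub_add_cancel j 1).symm))
  rcases hj with h | h
  · exact h
  rcases hj' with h' | h'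
  · exact absurd (by rw [sub_add_cancel, ← h, h']) (Fin.add_one_add_one_ne_self hn (j - 1))
  · rwa [sub_add_cancel] at h'

theorem nonempty_sunG_embedding {S K : Set V} (hS : ∀ a ∈ S, ∀ b ∈ S, ¬ G.Adj a b)
    (hK : G.IsClique K) (hSK : Disjoint S K) {s v : Fin n → V} (hs : Injective s)
    (hv : Injective v) (hsS : ∀ i, s i ∈ S) (hvK : ∀ j, v j ∈ K)
    (hadj : ∀ i j, G.Adj (s i) (v j) ↔ j = i ∨ j = i + 1) : Nonempty (sunG n ↪g G) := by
  have hsv : ∀ i j, s i ≠ v j := fun i j h => hSK.ne_of_mem (hsS i) (hvK j) h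
  refine ⟨⟨⟨Sum.elim s v, hs.sumElim hv hsv⟩, ?_⟩⟩
  rintro (i | i) (j | j)
  · exact iff_of_false (hS _ (hsS i) _ (hsS j)) (sunG_not_adj_inl_inl i j)
  · simpa [sunG_adj_inl_inr] using hadj i j
  · simpa [G.adj_comm, (sunG n).adj_comm, sunG_adj_inl_inr] using hadj j i
  · simp only [Embedding.coeFn_mk, Sum.elim_inr, sunG_adj_inr_inr]
    exact ⟨fun h hij => h.ne (congrArg v hij), fun h => hK (hvK i) (hvK j) (hv.ne h)⟩

end Sun

theorem stmt11_general {V : Type} [Fintype V] (G : SimpleGraph V) (S K : Set V)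
    (hsplit : IsSplitPartition G S K)
    (hdeg : ∀ v ∈ K, (G.neighborSet v ∩ S).ncard ≤ 2)
    (n : ℕ) (hn : 4 ≤ n)
    (hcyc : Nonempty (cycleG n ↪g branchGraph G K)) :
    Nonempty (sunG n ↪g G) := by
  obtain ⟨hcover, hSK, hS, hK⟩ := hsplit
  obtain ⟨f⟩ := hcyc
  have : NeZero n := ⟨by omega⟩
  have hbranch (j : Fin n) : (branchGraph G K).Adj (f (j - 1)) (f j) := by
    have := f.map_rel_iff.mpr (cycleG_adj_add_one (by omega) (j - 1))
    rwa [sub_add_cancel] at this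
  have hfS (j : Fin n) : f j ∈ S := (hcover _).resolve_right (hbranch j).2.1
  choose v hvK hv₁ hv₂ using fun j => (hbranch j).2.2.2.2.1
  have hnbr (j : Fin n) : G.neighborSet (v j) ∩ S = {f (j - 1), f j} :=
    Set.eq_pair_of_ncard_le_two (Set.toFinite _) (hdeg _ (hvK j)) ⟨hv₁ j, hfS _⟩
      ⟨hv₂ j, hfS j⟩ (hbranch j).2.2.1
  have hadj (i j : Fin n) : G.Adj (f i) (v j) ↔ j = i ∨ j = i + 1 := by
    have := Set.ext_iff.mp (hnbr j) (f i)
    simp only [Set.mem_inter_iff, mem_neighborSet, hfS i, and_true, Set.mem_insert_iff,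
      Set.mem_singleton_iff, f.injective.eq_iff, eq_sub_iff_add_eq] at this
    rw [G.adj_comm, this, or_comm, eq_comm (a := i + 1), eq_comm (a := i)]
  exact nonempty_sunG_embedding hS hK hSK f.injective
    (injective_of_adj_iff_eq_or_eq_add_one (by omega) hadj) hfS hvK hadj

/-- If `G` is a VPT split graph with split partition `(S,K)` in which
every `v ∈ K` has at most two neighbors in `S`, and `n ≥ 4`, then an induced cycle
`Cₙ` in the branch graph `B(G/K)` yields an induced `n`-sun `Sₙ` in `G`. -/
theorem stmt11 {V : Type} [Fintype V] (G : SimpleGraph V) (S K : Set V)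
    (hvpt : IsVPT G) (hsplit : IsSplitPartition G S K)
    (hdeg : ∀ v ∈ K, (G.neighborSet v ∩ S).ncard ≤ 2)
    (n : ℕ) (hn : 4 ≤ n)
    (hcyc : Nonempty (cycleG n ↪g branchGraph G K)) :
    Nonempty (sunG n ↪g G) :=
  stmt11_general G S K hsplit hdeg n hn hcyc
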